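/- (Theorem 2, conditional form.) Let T_opt be a multicast tree spanning M that minimizes Ψ among all multicast trees spanning M, let T_I be a multicast tree spanning M that minimizes |in(·)| among all multicast trees spanning M, and let T be a multicast tree spanning M with lv(T) ⊆ M and |in(T)| ≤ 12·|in(T_I)|. Then Ψ(T) ≤ 13·Ψ(T_opt). -/

import Mathlib

/-!
Compare `Ψ(T)` with `Ψ(S)` term by term for any multicast tree `S` with `|in(T)| ≤ c·|in(S)|`;
write `k = Σ p`. Transmissions by internal nodes: `k·|in(T)| ≤ c·k·|in(S)|`. Transmissions by
degree-one nodes: `Σ_{lv(T)} p ≤ k`, and every member is internal or a degree-one node of `S`,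
so `k ≤ k·|in(S)| + Σ_{lv(S)} p`. Receptions: since `lv(T) ⊆ M`, `nd(T) ⊆ in(T) ∪ M`, and a
tree always has a vertex of degree at most one, so `|in(S)| < |nd(S)|`; together
`|nd(T)| - 1 ≤ (c + 1)(|nd(S)| - 1)`. With `c = 12` and `S = T_opt` this gives the factor 13.
-/

namespace MEGCOM

/-- The set of internal nodes (degree at least 2) of a subgraph `T`. -/
def inn {V : Type*} {G : SimpleGraph V} (T : G.Subgraph) : Set V :=
  {v | v ∈ T.verts ∧ 2 ≤ (T.neighborSet v).ncard}

/-- The set of degree-one nodes of a subgraph `T`. -/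
def lv {V : Type*} {G : SimpleGraph V} (T : G.Subgraph) : Set V :=
  {v | v ∈ T.verts ∧ (T.neighborSet v).ncard = 1}

/-- `T` is a multicast tree spanning the member set `M`. -/
def IsMulticastTree {V : Type*} (G : SimpleGraph V) (M : Finset V) (T : G.Subgraph) : Prop :=
  T.coe.IsTree ∧ ↑M ⊆ T.verts

/-- Total energy `Ψ(T)` of a group communication session using `T` (fixed tx power). -/
noncomputable def psi {V : Type*} [Fintype V] {G : SimpleGraph V} (T : G.Subgraph)
    (M : Finset V) (p : V → ℕ) (εs εr : ℝ) : ℝ :=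
  (∑ u ∈ M, (p u : ℝ)) * ((inn T).ncard : ℝ) * εs
    + (∑ᶠ u ∈ lv T, (p u : ℝ)) * εs
    + (∑ u ∈ M, (p u : ℝ)) * ((T.verts.ncard : ℝ) - 1) * εr

open SimpleGraph

section Subgraph

variable {V : Type*} {G : SimpleGraph V} (S : G.Subgraph)

lemma ncard_neighborSet_eq_coe_degree (v : S.verts) [Fintype (S.coe.neighborSet v)] :
    (S.neighborSet v).ncard = S.coe.degree v := by
  rw [← Nat.card_coe_set_eq, ← Nat.card_congr (Subgraph.coeNeighborSetEquiv v),
    Nat.card_eq_fintype_card, card_neighborSet_eq_degree]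

lemma disjoint_inn_lv : Disjoint (inn S) (lv S) :=
  Set.disjoint_left.mpr fun _ hinn hlv => by
    have := hinn.2
    rw [hlv.2] at this
    omega

variable [Finite V]

lemma ncard_neighborSet_lt_ncard_verts {v : V} (hv : v ∈ S.verts) :
    (S.neighborSet v).ncard < S.verts.ncard :=
  Set.ncard_lt_ncard
    (Set.ssubset_iff_of_subset (S.neighborSet_subset_verts v) |>.mpr
      ⟨v, hv, fun h => (S.adj_sub h).ne rfl⟩)
    (Set.toFinite _)

lemma inn_eq_empty_of_ncard_verts_le_one (h : S.verts.ncard ≤ 1) : inn S = ∅ :=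
  Set.eq_empty_of_forall_notMem fun v hv => by
    have := ncard_neighborSet_lt_ncard_verts S hv.1
    have := hv.2
    omega

lemma lv_eq_empty_of_ncard_verts_le_one (h : S.verts.ncard ≤ 1) : lv S = ∅ :=
  Set.eq_empty_of_forall_notMem fun v hv => by
    have := ncard_neighborSet_lt_ncard_verts S hv.1
    have := hv.2
    omega

lemma verts_subset_inn_union_lv (hS : S.coe.Connected) (h : 1 < S.verts.ncard) :
    S.verts ⊆ inn S ∪ lv S := by
  intro v hv
  let _ : S.coe.LocallyFinite := fun _ => Fintype.ofFinite _
  have : Nontrivial S.verts := (Set.one_lt_ncard_iff_nontrivial).mp h |>.coe_sort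
  have hpos : 0 < (S.neighborSet v).ncard :=
    ncard_neighborSet_eq_coe_degree S ⟨v, hv⟩ ▸ hS.preconnected.degree_pos_of_nontrivial _
  by_cases h2 : 2 ≤ (S.neighborSet v).ncard
  · exact Or.inl ⟨hv, h2⟩
  · exact Or.inr ⟨hv, by omega⟩

lemma two_le_ncard_lv (hS : S.coe.IsTree) (h : 1 < S.verts.ncard) : 2 ≤ (lv S).ncard := by
  let _ : S.coe.LocallyFinite := fun _ => Fintype.ofFinite _
  have : Nontrivial S.verts := (Set.one_lt_ncard_iff_nontrivial).mp h |>.coe_sort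
  obtain ⟨u, w, hne, hu, hw⟩ := hS.exists_ne_and_degree_eq_one
  rw [← ncard_neighborSet_eq_coe_degree] at hu hw
  exact (Set.one_lt_ncard_iff).mpr ⟨u, w, ⟨u.2, hu⟩, ⟨w.2, hw⟩, Subtype.val_injective.ne hne⟩

lemma ncard_inn_lt_ncard_verts (hS : S.coe.IsTree) : (inn S).ncard < S.verts.ncard := by
  have hne : 0 < S.verts.ncard :=
    (Set.ncard_pos (Set.toFinite _)).mpr (Set.nonempty_coe_sort.mp hS.connected.nonempty)
  rcases le_or_gt S.verts.ncard 1 with h | h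
  · rw [inn_eq_empty_of_ncard_verts_le_one S h, Set.ncard_empty]
    exact hne
  · have hunion : (inn S ∪ lv S).ncard ≤ S.verts.ncard :=
      Set.ncard_le_ncard (Set.union_subset (fun _ hv => hv.1) fun _ hv => hv.1) (Set.toFinite _)
    rw [Set.ncard_union_eq (disjoint_inn_lv S) (Set.toFinite _) (Set.toFinite _)] at hunion
    have := two_le_ncard_lv S hS h
    omega

end Subgraph

lemma finsum_mem_le_finsum_mem_of_subset {ι N : Type*} [AddCommMonoid N] [Preorder N]
    [CanonicallyOrderedAdd N] (f : ι → N) {s t : Set ι} (h : s ⊆ t) (ht : t.Finite) :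
    ∑ᶠ i ∈ s, f i ≤ ∑ᶠ i ∈ t, f i := by
  rw [finsum_mem_eq_finite_toFinset_sum f (ht.subset h), finsum_mem_eq_finite_toFinset_sum f ht]
  exact Finset.sum_le_sum_of_subset (Set.Finite.toFinset_subset_toFinset.mpr h)

namespace IsMulticastTree

variable {V : Type*} [Finite V] {G : SimpleGraph V} {M : Finset V} {S T : G.Subgraph}

lemma card_le_ncard_verts (hS : IsMulticastTree G M S) : M.card ≤ S.verts.ncard := by
  simpa using Set.ncard_le_ncard hS.2 (Set.toFinite _)

lemma ncard_verts_le (hT : IsMulticastTree G M T) (hlv : lv T ⊆ M) (hM : M.Nonempty) :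
    T.verts.ncard ≤ (inn T).ncard + M.card := by
  rcases le_or_gt T.verts.ncard 1 with h | h
  · exact h.trans (hM.card_pos.trans_le (Nat.le_add_left _ _))
  · calc T.verts.ncard ≤ (inn T ∪ M).ncard :=
          Set.ncard_le_ncard ((verts_subset_inn_union_lv T hT.1.connected h).trans
            (Set.union_subset_union_right _ hlv)) (Set.toFinite _)
      _ ≤ (inn T).ncard + (M : Set V).ncard := Set.ncard_union_le _ _
      _ = (inn T).ncard + M.card := by rw [Set.ncard_coe_finset]

lemma ncard_verts_add_le {c : ℕ} (hT : IsMulticastTree G M T) (hlv : lv T ⊆ M)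
    (hM : M.Nonempty) (hS : IsMulticastTree G M S) (hin : (inn T).ncard ≤ c * (inn S).ncard) :
    T.verts.ncard + c ≤ (c + 1) * S.verts.ncard := by
  have hTM := hT.ncard_verts_le hlv hM
  have hMS := hS.card_le_ncard_verts
  have hinS : c * ((inn S).ncard + 1) ≤ c * S.verts.ncard :=
    Nat.mul_le_mul_left c (ncard_inn_lt_ncard_verts S hS.1)
  nlinarith

lemma finsum_lv_le (p : V → ℕ) (hT : IsMulticastTree G M T) (hlv : lv T ⊆ M)
    (hS : IsMulticastTree G M S) :
    ∑ᶠ u ∈ lv T, p u ≤ (∑ u ∈ M, p u) * (inn S).ncard + ∑ᶠ u ∈ lv S, p u := by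
  rcases le_or_gt S.verts.ncard 1 with hS1 | hS1
  · -- the two leaves of a nontrivial `T` would lie in `M ⊆ S.verts`
    have hT1 : T.verts.ncard ≤ 1 := by
      by_contra! hT1
      have := two_le_ncard_lv T hT.1 hT1
      have := Set.ncard_le_ncard (hlv.trans hS.2) (Set.toFinite S.verts)
      omega
    simp [lv_eq_empty_of_ncard_verts_le_one T hT1]
  have hTM : ∑ᶠ u ∈ lv T, p u ≤ ∑ u ∈ M, p u :=
    finsum_mem_coe_finset p M ▸ finsum_mem_le_finsum_mem_of_subset p hlv M.finite_toSet
  rcases (inn S).eq_empty_or_nonempty with hinn | hinn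
  · have hMS : (M : Set V) ⊆ lv S := fun u hu =>
      ((verts_subset_inn_union_lv S hS.1.connected hS1 (hS.2 hu)).resolve_left
        (hinn ▸ Set.notMem_empty u))
    have := finsum_mem_coe_finset p M ▸ finsum_mem_le_finsum_mem_of_subset p hMS (Set.toFinite _)
    omega
  · have : 1 ≤ (inn S).ncard := (Set.ncard_pos (Set.toFinite _)).mpr hinn
    exact hTM.trans (Nat.le_add_right_of_le (Nat.le_mul_of_pos_right _ this))

end IsMulticastTree

theorem psi_le_succ_mul_psi {V : Type*} [Fintype V] {G : SimpleGraph V} {M : Finset V}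
    {S T : G.Subgraph} (p : V → ℕ) {εs εr : ℝ} (hεs : 0 ≤ εs) (hεr : 0 ≤ εr) {c : ℕ}
    (hT : IsMulticastTree G M T) (hlv : lv T ⊆ M) (hS : IsMulticastTree G M S)
    (hin : (inn T).ncard ≤ c * (inn S).ncard) :
    psi T M p εs εr ≤ (c + 1) * psi S M p εs εr := by
  set k := ∑ u ∈ M, p u
  have hk : ∑ u ∈ M, (p u : ℝ) = k := by push_cast [k]; rfl
  have hcast : ∀ s : Set V, ∑ᶠ u ∈ s, (p u : ℝ) = ((∑ᶠ u ∈ s, p u : ℕ) : ℝ) :=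
    fun s => (Nat.cast_finsum_mem (Set.toFinite s) p).symm
  have hi : ((inn T).ncard : ℝ) ≤ c * (inn S).ncard := by exact_mod_cast hin
  have hb : ((∑ᶠ u ∈ lv T, p u : ℕ) : ℝ) ≤ k * (inn S).ncard + (∑ᶠ u ∈ lv S, p u : ℕ) := by
    exact_mod_cast hT.finsum_lv_le p hlv hS
  have hn : (k : ℝ) * (T.verts.ncard - 1) ≤ k * ((c + 1) * (S.verts.ncard - 1)) := by
    rcases M.eq_empty_or_nonempty with rfl | hM
    · simp [k]
    · have : (T.verts.ncard : ℝ) + c ≤ (c + 1) * S.verts.ncard := by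
        exact_mod_cast hT.ncard_verts_add_le hlv hM hS hin
      gcongr
      linarith
  simp only [psi, hk, hcast]
  have hsend := mul_le_mul_of_nonneg_right (mul_le_mul_of_nonneg_left hi k.cast_nonneg) hεs
  have hleaf := mul_le_mul_of_nonneg_right hb hεs
  have hrecv := mul_le_mul_of_nonneg_right hn hεr
  have hleafS : 0 ≤ (c : ℝ) * ((∑ᶠ u ∈ lv S, p u : ℕ) * εs) := by positivity
  linarith

theorem stmt5_general {V : Type*} [Fintype V] {G : SimpleGraph V} (M : Finset V)
    (p : V → ℕ) (εs εr : ℝ)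
    (hεs : 0 < εs) (hεr : 0 < εr)
    (Topt TI T : G.Subgraph)
    (hTopt : IsMulticastTree G M Topt)
    (hImin : ∀ S : G.Subgraph, IsMulticastTree G M S →
      (inn TI).ncard ≤ (inn S).ncard)
    (hT : IsMulticastTree G M T) (hlv : lv T ⊆ ↑M)
    (hin : (inn T).ncard ≤ 12 * (inn TI).ncard) :
    psi T M p εs εr ≤ 13 * psi Topt M p εs εr := by
  have hinOpt : (inn T).ncard ≤ 12 * (inn Topt).ncard :=
    hin.trans (Nat.mul_le_mul_left 12 (hImin Topt hTopt))
  have := psi_le_succ_mul_psi p hεs.le hεr.le hT hlv hTopt hinOpt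
  norm_num at this
  exact this

/-- Theorem 2, conditional form. -/
theorem stmt5 {V : Type*} [Fintype V] {G : SimpleGraph V} (M : Finset V)
    (p : V → ℕ) (hp : ∀ u ∉ M, p u = 0) (εs εr : ℝ)
    (hεs : 0 < εs) (hεr : 0 < εr) (hrs : εr ≤ εs)
    (Topt TI T : G.Subgraph)
    (hTopt : IsMulticastTree G M Topt)
    (hopt : ∀ S : G.Subgraph, IsMulticastTree G M S →
      psi Topt M p εs εr ≤ psi S M p εs εr)
    (hTI : IsMulticastTree G M TI)
    (hImin : ∀ S : G.Subgraph, IsMulticastTree G M S →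
      (inn TI).ncard ≤ (inn S).ncard)
    (hT : IsMulticastTree G M T) (hlv : lv T ⊆ ↑M)
    (hin : (inn T).ncard ≤ 12 * (inn TI).ncard) :
    psi T M p εs εr ≤ 13 * psi Topt M p εs εr :=
  stmt5_general M p εs εr hεs hεr Topt TI T hTopt hImin hT hlv hin

end MEGCOM
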